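/- arXiv:2601.23082 — 6 statements merged into one kernel-verified Lean document; each statement's English description precedes it below -/
import Mathlib

section
/- If X is an algebraic dcpo, then the Scott topology on X is sober: every irreducible closed subset is the closure of a unique point. Concretely, given an irreducible Scott-closed set C, the set D of finite elements of X belonging to C is directed, and C is the down-closure of sup D. -/
def ScottOpen {X : Type*} [Preorder X] (U : Set X) : Prop :=
  (∀ ⦃x y : X⦄, x ≤ y → x ∈ U → y ∈ U) ∧
  ∀ D : Set X, D.Nonempty → DirectedOn (· ≤ ·) D →
    ∀ a : X, IsLUB D a → a ∈ U → (D ∩ U).Nonempty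

def IsDcpo (X : Type*) [Preorder X] : Prop :=
  ∀ D : Set X, D.Nonempty → DirectedOn (· ≤ ·) D → ∃ a : X, IsLUB D a

def IsFiniteElt {X : Type*} [Preorder X] (d : X) : Prop :=
  ∀ D : Set X, D.Nonempty → DirectedOn (· ≤ ·) D →
    ∀ a : X, IsLUB D a → d ≤ a → ∃ e ∈ D, d ≤ e

def IsAlgebraicDcpo (X : Type*) [Preorder X] : Prop :=
  ∀ x : X, DirectedOn (· ≤ ·) {d : X | IsFiniteElt d ∧ d ≤ x} ∧
    IsLUB {d : X | IsFiniteElt d ∧ d ≤ x} x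

def BoundedComplete (X : Type*) [Preorder X] : Prop :=
  ∀ a b : X, (∃ c : X, a ≤ c ∧ b ≤ c) → ∃ s : X, IsLUB {a, b} s

def scottTop (X : Type*) [Preorder X] : TopologicalSpace X where
  IsOpen := ScottOpen
  isOpen_univ := ⟨fun _ _ _ h => h, fun D hD _ _ _ _ => by
    obtain ⟨d, hd⟩ := hD; exact ⟨d, hd, trivial⟩⟩
  isOpen_inter := fun U V hU hV => by
    constructor
    · intro x y hxy hx; exact ⟨hU.1 hxy hx.1, hV.1 hxy hx.2⟩
    · intro D hne hdir a ha haUV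
      obtain ⟨u, huD, huU⟩ := hU.2 D hne hdir a ha haUV.1
      obtain ⟨v, hvD, hvV⟩ := hV.2 D hne hdir a ha haUV.2
      obtain ⟨w, hwD, huw, hvw⟩ := hdir u huD v hvD
      exact ⟨w, hwD, hU.1 huw huU, hV.1 hvw hvV⟩
  isOpen_sUnion := fun S hS => by
    constructor
    · intro x y hxy hx
      obtain ⟨U, hUS, hxU⟩ := hx
      exact ⟨U, hUS, (hS U hUS).1 hxy hxU⟩
    · intro D hne hdir a ha haS
      obtain ⟨U, hUS, haU⟩ := haS
      obtain ⟨d, hdD, hdU⟩ := (hS U hUS).2 D hne hdir a ha haU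
      exact ⟨d, hdD, U, hUS, hdU⟩

def ScottSaturated {X : Type*} [Preorder X] (S : Set X) : Prop :=
  S = ⋂₀ {U : Set X | ScottOpen U ∧ S ⊆ U}

def Saturated {X : Type*} [TopologicalSpace X] (S : Set X) : Prop :=
  S = ⋂₀ {U : Set X | IsOpen U ∧ S ⊆ U}

def ScottCont' {X Y : Type*} [Preorder X] [Preorder Y] (f : X → Y) : Prop :=
  Monotone f ∧ ∀ D : Set X, D.Nonempty → DirectedOn (· ≤ ·) D →
    ∀ a : X, IsLUB D a → IsLUB (f '' D) (f a)

def ContMap (X Y : Type*) [Preorder X] [Preorder Y] := {f : X → Y // ScottCont' f}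

instance {X Y : Type*} [Preorder X] [Preorder Y] : Preorder (ContMap X Y) :=
  Preorder.lift Subtype.val

open Classical in
noncomputable def stepFun {X Y : Type*} [Preorder X] [Preorder Y] [OrderBot Y]
    (d : X) (e : Y) : X → Y :=
  fun x => if d ≤ x then e else ⊥

/-- The Scott topology of an algebraic dcpo is sober: every
irreducible Scott-closed set `C` is the down-closure of the supremum of the
directed set of finite elements in `C`, and this point is unique. -/
theorem algebraic_dcpo_scott_sober
    {X : Type*} [PartialOrder X] (hX : IsDcpo X) (hA : IsAlgebraicDcpo X)
    (C : Set X) (hC : ScottOpen Cᶜ) (hne : C.Nonempty)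
    (hirr : ∀ F G : Set X, ScottOpen Fᶜ → ScottOpen Gᶜ →
      C ⊆ F ∪ G → C ⊆ F ∨ C ⊆ G) :
    DirectedOn (· ≤ ·) {d : X | IsFiniteElt d ∧ d ∈ C} ∧
    ∃ a : X, IsLUB {d : X | IsFiniteElt d ∧ d ∈ C} a ∧ C = Set.Iic a ∧
      ∀ b : X, C = Set.Iic b → b = a := by
  -- basic facts about C
  have hdown : ∀ ⦃x y : X⦄, x ≤ y → y ∈ C → x ∈ C := by
    intro x y hxy hy
    by_contra hx
    exact (hC.1 hxy hx) hy
  have hsup : ∀ S : Set X, S.Nonempty → DirectedOn (· ≤ ·) S → S ⊆ C →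
      ∀ a : X, IsLUB S a → a ∈ C := by
    intro S hSne hSdir hSC a ha
    by_contra haC
    obtain ⟨e, heS, heC⟩ := hC.2 S hSne hSdir a ha haC
    exact heC (hSC heS)
  -- upper set of a finite element is Scott-open
  have hupOpen : ∀ d : X, IsFiniteElt d → ScottOpen {x | d ≤ x} := by
    intro d hd
    refine ⟨fun x y hxy hx => le_trans hx hxy, ?_⟩
    intro S hSne hSdir a ha hda
    obtain ⟨e, heS, hde⟩ := hd S hSne hSdir a ha hda
    exact ⟨e, heS, hde⟩
  -- for every x, the set of finite elements below x is nonempty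
  have hfne : ∀ x : X, {d : X | IsFiniteElt d ∧ d ≤ x}.Nonempty := by
    intro x
    by_contra h
    rw [Set.not_nonempty_iff_eq_empty] at h
    have hx : IsLUB (∅ : Set X) x := h ▸ (hA x).2
    have hbot : ∀ y : X, x ≤ y := fun y => hx.2 (fun z hz => hz.elim)
    have hxfin : IsFiniteElt x := by
      intro S hSne hSdir a ha hxa
      obtain ⟨e, he⟩ := hSne
      exact ⟨e, he, hbot e⟩
    have : x ∈ {d : X | IsFiniteElt d ∧ d ≤ x} := ⟨hxfin, le_refl x⟩
    rw [h] at this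
    exact this
  set D : Set X := {d : X | IsFiniteElt d ∧ d ∈ C} with hD
  -- D directed
  have hDdir : DirectedOn (· ≤ ·) D := by
    intro d₁ hd₁ d₂ hd₂
    -- find common upper bound in C
    have hub : ∃ x ∈ C, d₁ ≤ x ∧ d₂ ≤ x := by
      by_contra h
      push_neg at h
      have hsub : C ⊆ {x | d₁ ≤ x}ᶜ ∪ {x | d₂ ≤ x}ᶜ := by
        intro x hx
        by_contra hx'
        simp only [Set.mem_union, Set.mem_compl_iff, Set.mem_setOf_eq, not_or, not_not] at hx'
        exact h x hx hx'.1 hx'.2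
      have h₁ : ScottOpen ({x | d₁ ≤ x}ᶜ)ᶜ := by
        rw [compl_compl]; exact hupOpen d₁ hd₁.1
      have h₂ : ScottOpen ({x | d₂ ≤ x}ᶜ)ᶜ := by
        rw [compl_compl]; exact hupOpen d₂ hd₂.1
      rcases hirr _ _ h₁ h₂ hsub with hc | hc
      · exact (hc hd₁.2) (le_refl d₁)
      · exact (hc hd₂.2) (le_refl d₂)
    obtain ⟨x, hxC, h1x, h2x⟩ := hub
    obtain ⟨hxdir, hxlub⟩ := hA x
    obtain ⟨e₁, he₁, h1e⟩ := hd₁.1 _ (hfne x) hxdir x hxlub h1x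
    obtain ⟨e₂, he₂, h2e⟩ := hd₂.1 _ (hfne x) hxdir x hxlub h2x
    obtain ⟨e, heS, h1, h2⟩ := hxdir e₁ he₁ e₂ he₂
    exact ⟨e, ⟨heS.1, hdown heS.2 hxC⟩, le_trans h1e h1, le_trans h2e h2⟩
  -- D nonempty
  have hDne : D.Nonempty := by
    obtain ⟨x, hxC⟩ := hne
    obtain ⟨d, hdfin, hdx⟩ := hfne x
    exact ⟨d, hdfin, hdown hdx hxC⟩
  obtain ⟨a, ha⟩ := hX D hDne hDdir
  have haC : a ∈ C := hsup D hDne hDdir (fun d hd => hd.2) a ha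
  have hCIic : C = Set.Iic a := by
    apply Set.Subset.antisymm
    · intro x hx
      obtain ⟨hxdir, hxlub⟩ := hA x
      have : x ≤ a := hxlub.2 (fun d hd => ha.1 ⟨hd.1, hdown hd.2 hx⟩)
      exact this
    · intro x hx
      exact hdown hx haC
  refine ⟨hDdir, a, ha, hCIic, ?_⟩
  intro b hb
  have h1 : b ≤ a := by
    have : b ∈ Set.Iic a := hCIic ▸ (hb ▸ Set.mem_Iic.mpr (le_refl b) : b ∈ C)
    exact this
  have h2 : a ≤ b := by
    have : a ∈ Set.Iic b := hb ▸ (hCIic ▸ Set.mem_Iic.mpr (le_refl a) : a ∈ C)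
    exact this
  exact le_antisymm h1 h2
end

section
/- (Hofmann–Mislove style consequence) Every sober topological space X is well-filtered: if Q is a codirected (filtered) family of compact-saturated subsets of X and ⋂Q ⊆ U for some open U, then Q ⊆ U already holds for some Q ∈ Q. -/
/-!
Suppose no member of `Q` lies in `U`. Then `Uᶜ` is a closed set meeting every member of `Q`;
since the members are compact, Zorn's lemma yields a minimal such closed set `C ⊆ Uᶜ`, and because
`Q` is codirected, `C` is irreducible. Its generic point `x` specializes to a point of each
`q ∈ Q`, so `x` lies in every open set containing `q`, hence in the saturated set `q`. Thus
`x ∈ ⋂₀ Q ⊆ U`, contradicting `x ∈ C ⊆ Uᶜ`.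
-/

section

open Set

variable {X : Type*} [TopologicalSpace X] {Q : Set (Set X)}

theorem Saturated.mem_of_specializes {s : Set X} (hs : Saturated s) {x y : X} (hxy : x ⤳ y)
    (hy : y ∈ s) : x ∈ s := by
  rw [hs]
  rintro V ⟨hV, hsV⟩
  exact hxy.mem_open hV (hsV hy)

theorem QuasiSober.of_exists_eq_closure_singleton
    (h : ∀ C : Set X, IsClosed C → C.Nonempty →
      (∀ F G : Set X, IsClosed F → IsClosed G → C ⊆ F ∪ G → C ⊆ F ∨ C ⊆ G) →
      ∃ x : X, C = closure {x}) :
    QuasiSober X where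
  sober {S} hS hcl :=
    let ⟨x, hx⟩ := h S hcl hS.nonempty
      (isPreirreducible_iff_isClosed_union_isClosed.1 hS.isPreirreducible)
    ⟨x, hx.symm⟩

theorem IsCompact.inter_sInter_nonempty_of_directedOn {K : Set X} (hK : IsCompact K)
    {c : Set (Set X)} (hc : c.Nonempty) (hdir : DirectedOn (· ⊇ ·) c)
    (hcl : ∀ C ∈ c, IsClosed C) (hmeet : ∀ C ∈ c, (K ∩ C).Nonempty) :
    (K ∩ ⋂₀ c).Nonempty := by
  have : Nonempty c := hc.to_subtype
  by_contra h
  rw [not_nonempty_iff_eq_empty, sInter_eq_iInter] at h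
  obtain ⟨⟨C, hC⟩, hKC⟩ := hK.elim_directed_family_closed (fun C : c => (C : Set X))
    (fun C => hcl C C.2) h hdir.directed_val
  exact (hmeet C hC).ne_empty hKC

theorem exists_minimal_isClosed_inter_nonempty (hQ : ∀ q ∈ Q, IsCompact q) {C₀ : Set X}
    (hC₀ : IsClosed C₀) (hmeet : ∀ q ∈ Q, (q ∩ C₀).Nonempty) :
    ∃ C ⊆ C₀, Minimal (fun C => IsClosed C ∧ ∀ q ∈ Q, (q ∩ C).Nonempty) C := by
  refine zorn_superset_nonempty {C | IsClosed C ∧ ∀ q ∈ Q, (q ∩ C).Nonempty}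
    (fun c hcS hchain hc => ⟨⋂₀ c, ⟨isClosed_sInter fun C hC => (hcS hC).1, fun q hq => ?_⟩,
      fun _ => sInter_subset_of_mem⟩) C₀ ⟨hC₀, hmeet⟩
  have hdir : DirectedOn (· ⊇ ·) c := fun a ha b hb =>
    (hchain.total ha hb).elim (fun h => ⟨a, ha, subset_rfl, h⟩) fun h => ⟨b, hb, h, subset_rfl⟩
  exact (hQ q hq).inter_sInter_nonempty_of_directedOn hc hdir
    (fun C hC => (hcS hC).1) (fun C hC => (hcS hC).2 q hq)

theorem isIrreducible_of_minimal_isClosed_inter_nonempty (hne : Q.Nonempty)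
    (hdir : DirectedOn (· ⊇ ·) Q) {C : Set X}
    (hC : Minimal (fun C => IsClosed C ∧ ∀ q ∈ Q, (q ∩ C).Nonempty) C) :
    IsIrreducible C := by
  obtain ⟨hCcl, hCmeet⟩ := hC.prop
  have avoid : ∀ F, IsClosed F → ¬C ⊆ F → ∃ q ∈ Q, q ∩ (C ∩ F) = ∅ := by
    intro F hF hCF
    by_contra! h
    exact hCF ((hC.le_of_le ⟨hCcl.inter hF, h⟩ inter_subset_left).trans inter_subset_right)
  refine ⟨(hCmeet _ hne.some_mem).mono inter_subset_right,
    isPreirreducible_iff_isClosed_union_isClosed.2 fun F G hF hG hFG => ?_⟩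
  by_contra! hCFG
  obtain ⟨q₁, hq₁, hq₁F⟩ := avoid F hF hCFG.1
  obtain ⟨q₂, hq₂, hq₂G⟩ := avoid G hG hCFG.2
  obtain ⟨q, hq, hqq₁, hqq₂⟩ := hdir q₁ hq₁ q₂ hq₂
  obtain ⟨z, hzq, hzC⟩ := hCmeet q hq
  rcases hFG hzC with hzF | hzG
  · exact (eq_empty_iff_forall_notMem.1 hq₁F) z ⟨hqq₁ hzq, hzC, hzF⟩
  · exact (eq_empty_iff_forall_notMem.1 hq₂G) z ⟨hqq₂ hzq, hzC, hzG⟩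

theorem QuasiSober.exists_mem_subset_of_sInter_subset [QuasiSober X] (hne : Q.Nonempty)
    (hdir : DirectedOn (· ⊇ ·) Q) (hQ : ∀ q ∈ Q, IsCompact q ∧ Saturated q) {U : Set X}
    (hU : IsOpen U) (hsub : ⋂₀ Q ⊆ U) : ∃ q ∈ Q, q ⊆ U := by
  by_contra! hQU
  obtain ⟨C, hCU, hC⟩ := exists_minimal_isClosed_inter_nonempty (fun q hq => (hQ q hq).1)
    hU.isClosed_compl fun q hq => inter_compl_nonempty_iff.2 (hQU q hq)
  obtain ⟨x, hx⟩ :=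
    QuasiSober.sober (isIrreducible_of_minimal_isClosed_inter_nonempty hne hdir hC) hC.prop.1
  have hxQ : x ∈ ⋂₀ Q := fun q hq =>
    let ⟨_, hyq, hyC⟩ := hC.prop.2 q hq
    (hQ q hq).2.mem_of_specializes (hx.specializes hyC) hyq
  exact hCU hx.mem (hsub hxQ)

end

/-- Every sober space is well-filtered. -/
theorem sober_wellFiltered {X : Type*} [TopologicalSpace X]
    (hsober : ∀ C : Set X, IsClosed C → C.Nonempty →
      (∀ F G : Set X, IsClosed F → IsClosed G → C ⊆ F ∪ G → C ⊆ F ∨ C ⊆ G) →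
      ∃! x : X, C = closure {x})
    (Q : Set (Set X)) (hne : Q.Nonempty) (hdir : DirectedOn (· ⊇ ·) Q)
    (hQ : ∀ q ∈ Q, IsCompact q ∧ Saturated q)
    (U : Set X) (hU : IsOpen U) (hsub : ⋂₀ Q ⊆ U) :
    ∃ q ∈ Q, q ⊆ U := by
  have : QuasiSober X := .of_exists_eq_closure_singleton fun C hC hCne hCirr =>
    (hsober C hC hCne hCirr).exists
  exact QuasiSober.exists_mem_subset_of_sInter_subset hne hdir hQ hU hsub
end

section
/- (Hofmann–Mislove theorem) Let X be a sober space and U ⊆ O(X) a Scott-open filter of open sets (i.e. a filter in the inclusion-ordered lattice of opens that is inaccessible by directed unions). If ⋂U ⊆ V for some open V, then V ∈ U. -/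
/-!
If `V ∉ 𝒰`, Zorn's lemma (applicable because `𝒰` is inaccessible by directed unions) gives an
open `W ⊇ V` maximal among the opens outside `𝒰`. Maximality means that an open `u` meets `Wᶜ`
exactly when `W ∪ u ∈ 𝒰`, so closure of `𝒰` under binary intersections makes the closed set `Wᶜ`
irreducible. Its generic point lies in every member of `𝒰`, hence in `V ⊆ W`: a contradiction.
-/

open Set

section HofmannMislove

variable {X : Type*} [TopologicalSpace X]

theorem quasiSober_of_forall_eq_closure_singleton
    (h : ∀ C : Set X, IsClosed C → C.Nonempty →
      (∀ F G : Set X, IsClosed F → IsClosed G → C ⊆ F ∪ G → C ⊆ F ∨ C ⊆ G) →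
      ∃ x : X, C = closure {x}) :
    QuasiSober X where
  sober {S} hS hSc := by
    obtain ⟨x, hx⟩ := h S hSc hS.nonempty
      (isPreirreducible_iff_isClosed_union_isClosed.mp hS.isPreirreducible)
    exact ⟨x, hx.symm⟩

theorem exists_maximal_isOpen_notMem {𝒰 : Set (Set X)}
    (hscott : ∀ D : Set (Set X), (∀ d ∈ D, IsOpen d) → D.Nonempty →
      DirectedOn (· ⊆ ·) D → ⋃₀ D ∈ 𝒰 → ∃ d ∈ D, d ∈ 𝒰)
    {V : Set X} (hV : IsOpen V) (hVU : V ∉ 𝒰) :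
    ∃ W, V ⊆ W ∧ Maximal (fun W => IsOpen W ∧ W ∉ 𝒰) W := by
  refine zorn_subset_nonempty _ (fun c hc hchain hne => ?_) V ⟨hV, hVU⟩
  refine ⟨⋃₀ c, ⟨isOpen_sUnion fun u hu => (hc hu).1, fun hmem => ?_⟩,
    fun u hu => subset_sUnion_of_mem hu⟩
  obtain ⟨d, hd, hdU⟩ := hscott c (fun u hu => (hc hu).1) hne hchain.directedOn hmem
  exact (hc hd).2 hdU

namespace Maximal

variable {𝒰 : Set (Set X)} {W : Set X}

theorem compl_inter_nonempty_iff_union_mem (hW : Maximal (fun W => IsOpen W ∧ W ∉ 𝒰) W)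
    {u : Set X} (hu : IsOpen u) :
    (Wᶜ ∩ u).Nonempty ↔ W ∪ u ∈ 𝒰 := by
  rw [inter_comm, inter_compl_nonempty_iff, not_iff_comm]
  constructor
  · intro hWu
    exact union_subset_iff.mp (hW.2 ⟨hW.1.1.union hu, hWu⟩ subset_union_left) |>.2
  · intro huW
    rw [union_eq_self_of_subset_right huW]
    exact hW.1.2

theorem isPreirreducible_compl (hW : Maximal (fun W => IsOpen W ∧ W ∉ 𝒰) W)
    (hinter : ∀ u ∈ 𝒰, ∀ v ∈ 𝒰, u ∩ v ∈ 𝒰) :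
    IsPreirreducible Wᶜ := by
  intro u v hu hv huW hvW
  have hWuv : W ∪ (u ∩ v) ∈ 𝒰 := by
    rw [union_inter_distrib_left]
    exact hinter _ ((hW.compl_inter_nonempty_iff_union_mem hu).mp huW)
      _ ((hW.compl_inter_nonempty_iff_union_mem hv).mp hvW)
  exact (hW.compl_inter_nonempty_iff_union_mem (hu.inter hv)).mpr hWuv

end Maximal

theorem mem_of_sInter_subset_of_quasiSober [QuasiSober X] {𝒰 : Set (Set X)}
    (hopen : ∀ u ∈ 𝒰, IsOpen u) (hne : 𝒰.Nonempty)
    (hup : ∀ u ∈ 𝒰, ∀ v : Set X, IsOpen v → u ⊆ v → v ∈ 𝒰)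
    (hinter : ∀ u ∈ 𝒰, ∀ v ∈ 𝒰, u ∩ v ∈ 𝒰)
    (hscott : ∀ D : Set (Set X), (∀ d ∈ D, IsOpen d) → D.Nonempty →
      DirectedOn (· ⊆ ·) D → ⋃₀ D ∈ 𝒰 → ∃ d ∈ D, d ∈ 𝒰)
    {V : Set X} (hV : IsOpen V) (hsub : ⋂₀ 𝒰 ⊆ V) :
    V ∈ 𝒰 := by
  by_contra hVU
  obtain ⟨W, hVW, hW⟩ := exists_maximal_isOpen_notMem hscott hV hVU
  have hmeets : ∀ u ∈ 𝒰, (Wᶜ ∩ u).Nonempty := fun u hu =>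
    (hW.compl_inter_nonempty_iff_union_mem (hopen u hu)).mpr
      (hup u hu _ (hW.1.1.union (hopen u hu)) subset_union_right)
  obtain ⟨u₀, hu₀⟩ := hne
  have hirr : IsIrreducible Wᶜ :=
    ⟨(hmeets u₀ hu₀).mono inter_subset_left, hW.isPreirreducible_compl hinter⟩
  obtain ⟨x, hx⟩ := QuasiSober.sober hirr hW.1.1.isClosed_compl
  have hxU : x ∈ ⋂₀ 𝒰 := fun u hu => (hx.mem_open_set_iff (hopen u hu)).mpr (hmeets u hu)
  exact hx.mem (hVW (hsub hxU))

end HofmannMislove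

/-- Hofmann–Mislove: in a sober space, a Scott-open filter of open
sets contains every open containing its intersection. -/
theorem hofmann_mislove {X : Type*} [TopologicalSpace X]
    (hsober : ∀ C : Set X, IsClosed C → C.Nonempty →
      (∀ F G : Set X, IsClosed F → IsClosed G → C ⊆ F ∪ G → C ⊆ F ∨ C ⊆ G) →
      ∃! x : X, C = closure {x})
    (𝒰 : Set (Set X)) (hopen : ∀ u ∈ 𝒰, IsOpen u) (hne : 𝒰.Nonempty)
    (hup : ∀ u ∈ 𝒰, ∀ v : Set X, IsOpen v → u ⊆ v → v ∈ 𝒰)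
    (hinter : ∀ u ∈ 𝒰, ∀ v ∈ 𝒰, u ∩ v ∈ 𝒰)
    (hscott : ∀ D : Set (Set X), (∀ d ∈ D, IsOpen d) → D.Nonempty →
      DirectedOn (· ⊆ ·) D → ⋃₀ D ∈ 𝒰 → ∃ d ∈ D, d ∈ 𝒰)
    (V : Set X) (hV : IsOpen V) (hsub : ⋂₀ 𝒰 ⊆ V) :
    V ∈ 𝒰 := by
  have : QuasiSober X := quasiSober_of_forall_eq_closure_singleton fun C hC hne hirr =>
    (hsober C hC hne hirr).exists
  exact mem_of_sInter_subset_of_quasiSober hopen hne hup hinter hscott hV hsub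
end

section
/- Let X be a T0, locally compact, well-filtered topological space. Then X is sober. -/

def satOf {X : Type*} [TopologicalSpace X] (K : Set X) : Set X :=
  ⋂₀ {U : Set X | IsOpen U ∧ K ⊆ U}

lemma subset_satOf {X : Type*} [TopologicalSpace X] (K : Set X) : K ⊆ satOf K :=
  fun _ hx _ hU => hU.2 hx

lemma satOf_subset {X : Type*} [TopologicalSpace X] {K U : Set X}
    (hU : IsOpen U) (hKU : K ⊆ U) : satOf K ⊆ U :=
  fun _ hx => hx U ⟨hU, hKU⟩

lemma saturated_satOf {X : Type*} [TopologicalSpace X] (K : Set X) :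
    Saturated (satOf K) := by
  apply Set.Subset.antisymm
  · intro x hx U hU
    exact hx U ⟨hU.1, (subset_satOf K).trans hU.2⟩
  · intro x hx U hU
    exact hx U ⟨hU.1, satOf_subset hU.1 hU.2⟩

lemma isCompact_satOf {X : Type*} [TopologicalSpace X] {K : Set X}
    (hK : IsCompact K) : IsCompact (satOf K) := by
  rw [isCompact_iff_finite_subcover]
  intro ι U hU hcov
  obtain ⟨t, ht⟩ := hK.elim_finite_subcover U hU ((subset_satOf K).trans hcov)
  exact ⟨t, satOf_subset (isOpen_iUnion fun i => isOpen_iUnion fun _ => hU i) ht⟩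

/-- A T0, locally compact, well-filtered space is sober. -/
theorem t0_locallyCompact_wellFiltered_sober
    {X : Type*} [TopologicalSpace X] [T0Space X]
    (hlc : ∀ (x : X) (U : Set X), IsOpen U → x ∈ U →
      ∃ V K : Set X, IsOpen V ∧ IsCompact K ∧ x ∈ V ∧ V ⊆ K ∧ K ⊆ U)
    (hwf : ∀ Q : Set (Set X), Q.Nonempty → DirectedOn (· ⊇ ·) Q →
      (∀ q ∈ Q, IsCompact q ∧ Saturated q) →
      ∀ U : Set X, IsOpen U → ⋂₀ Q ⊆ U → ∃ q ∈ Q, q ⊆ U)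
    (C : Set X) (hC : IsClosed C) (hne : C.Nonempty)
    (hirr : ∀ F G : Set X, IsClosed F → IsClosed G → C ⊆ F ∪ G → C ⊆ F ∨ C ⊆ G) :
    ∃! x : X, C = closure {x} := by
    -- irreducibility in open form
  have hmeet : ∀ U V : Set X, IsOpen U → IsOpen V → (C ∩ U).Nonempty →
      (C ∩ V).Nonempty → (C ∩ (U ∩ V)).Nonempty := by
    intro U V hU hV hCU hCV
    by_contra h
    rw [Set.not_nonempty_iff_eq_empty] at h
    have hsub : C ⊆ Uᶜ ∪ Vᶜ := by
      intro x hx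
      by_contra hx'
      simp only [Set.mem_union, Set.mem_compl_iff, not_or, not_not] at hx'
      exact Set.eq_empty_iff_forall_notMem.mp h x ⟨hx, hx'.1, hx'.2⟩
    rcases hirr _ _ hU.isClosed_compl hV.isClosed_compl hsub with h1 | h1
    · obtain ⟨x, hx⟩ := hCU; exact h1 hx.1 hx.2
    · obtain ⟨x, hx⟩ := hCV; exact h1 hx.1 hx.2
  -- the family
  set Q : Set (Set X) := {S | IsCompact S ∧ Saturated S ∧ (C ∩ interior S).Nonempty}
    with hQdef
  have hmk : ∀ (U : Set X), IsOpen U → (C ∩ U).Nonempty →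
      ∃ S ∈ Q, S ⊆ U := by
    intro U hU ⟨x, hxC, hxU⟩
    obtain ⟨V, K, hV, hK, hxV, hVK, hKU⟩ := hlc x U hU hxU
    refine ⟨satOf K, ⟨isCompact_satOf hK, saturated_satOf K, ⟨x, hxC, ?_⟩⟩,
      satOf_subset hU hKU⟩
    exact interior_maximal (hVK.trans (subset_satOf K)) hV hxV
  have hQne : Q.Nonempty := by
    obtain ⟨S, hS, _⟩ := hmk Set.univ isOpen_univ (by simpa using hne)
    exact ⟨S, hS⟩
  have hQdir : DirectedOn (· ⊇ ·) Q := by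
    rintro S ⟨hSc, hSs, hSne⟩ T ⟨hTc, hTs, hTne⟩
    have := hmeet _ _ isOpen_interior isOpen_interior hSne hTne
    obtain ⟨W, hWQ, hWsub⟩ := hmk _ (isOpen_interior.inter isOpen_interior) this
    exact ⟨W, hWQ, hWsub.trans ((Set.inter_subset_left).trans interior_subset),
      hWsub.trans ((Set.inter_subset_right).trans interior_subset)⟩
  -- intersection meets C
  have hint : (⋂₀ Q ∩ C).Nonempty := by
    by_contra h
    rw [Set.not_nonempty_iff_eq_empty] at h
    have hsub : ⋂₀ Q ⊆ Cᶜ := fun x hx hxC =>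
      Set.eq_empty_iff_forall_notMem.mp h x ⟨hx, hxC⟩
    obtain ⟨q, hqQ, hq⟩ := hwf Q hQne hQdir (fun q hq => ⟨hq.1, hq.2.1⟩)
      Cᶜ hC.isOpen_compl hsub
    obtain ⟨x, hxC, hxq⟩ := hqQ.2.2
    exact hq (interior_subset hxq) hxC
  obtain ⟨x, hxQ, hxC⟩ := hint
  refine ⟨x, ?_, ?_⟩
  · -- C = closure {x}
    apply Set.Subset.antisymm
    · intro y hyC
      by_contra hy
      obtain ⟨U, hU, hyU, hxU⟩ : ∃ U : Set X, IsOpen U ∧ y ∈ U ∧ x ∉ U := by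
        by_contra h
        push_neg at h
        exact hy (by
          rw [mem_closure_iff]
          intro U hU hyU
          exact ⟨x, h U hU hyU, rfl⟩)
      obtain ⟨S, hSQ, hSU⟩ := hmk U hU ⟨y, hyC, hyU⟩
      exact hxU (hSU (hxQ S hSQ))
    · exact closure_minimal (Set.singleton_subset_iff.mpr hxC) hC
  · intro y hy
    have hxy : C = closure {x} := by
      apply Set.Subset.antisymm
      · intro z hzC
        by_contra hz
        obtain ⟨U, hU, hzU, hxU⟩ : ∃ U : Set X, IsOpen U ∧ z ∈ U ∧ x ∉ U := by
          by_contra h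
          push_neg at h
          exact hz (by
            rw [mem_closure_iff]
            intro U hU hzU
            exact ⟨x, h U hU hzU, rfl⟩)
        obtain ⟨S, hSQ, hSU⟩ := hmk U hU ⟨z, hzC, hzU⟩
        exact hxU (hSU (hxQ S hSQ))
      · exact closure_minimal (Set.singleton_subset_iff.mpr hxC) hC
    have : closure ({y} : Set X) = closure {x} := hy ▸ hxy ▸ rfl
    exact (inseparable_iff_closure_eq.mpr this).eq
end

section
/- Let X, Y be Scott domains, Q a compact-saturated subset of X, and V a Scott-open subset of Y. Then the set Q ⇒ V = {f : X → Y Scott-continuous | f(Q) ⊆ V} is Scott-open in the function space [X → Y] ordered pointwise; and for V' Scott-open in X and Q' compact-saturated in Y, the set V' ⇒ Q' is compact-saturated in [X → Y]. -/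
namespace FSRAux

open Set

variable {P : Type*}

section Generic
variable [Preorder P]

/-- Upward closure. -/
def upC (S : Set P) : Set P := {x | ∃ s ∈ S, s ≤ x}

lemma subset_upC {S : Set P} : S ⊆ upC S := fun x hx => ⟨x, hx, le_refl x⟩

lemma upC_mono {S T : Set P} (h : S ⊆ T) : upC S ⊆ upC T :=
  fun x ⟨s, hs, hsx⟩ => ⟨s, h hs, hsx⟩

lemma upper_upC {S : Set P} : ∀ ⦃a b : P⦄, a ≤ b → a ∈ upC S → b ∈ upC S :=
  fun a b hab ⟨s, hs, hsa⟩ => ⟨s, hs, le_trans hsa hab⟩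

lemma upC_subset_of_upper {S U : Set P} (hU : ∀ ⦃a b : P⦄, a ≤ b → a ∈ U → b ∈ U)
    (h : S ⊆ U) : upC S ⊆ U := fun _ ⟨s, hs, hsx⟩ => hU hsx (h hs)

lemma scottOpen_compl_le (y : P) : ScottOpen {x : P | ¬ x ≤ y} := by
  constructor
  · intro a b hab ha hb; exact ha (le_trans hab hb)
  · intro D hne hdir a ha haU
    by_contra h
    refine haU (ha.2 (fun d hd => ?_))
    by_contra hc
    exact h ⟨d, hd, hc⟩

lemma scottSaturated_iff_upper {S : Set P} :
    ScottSaturated S ↔ ∀ ⦃a b : P⦄, a ≤ b → a ∈ S → b ∈ S := by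
  constructor
  · intro hS a b hab ha
    have hSeq : S = ⋂₀ {U : Set P | ScottOpen U ∧ S ⊆ U} := hS
    rw [hSeq]
    intro U hU
    have haU : a ∈ U := by rw [hSeq] at ha; exact ha U hU
    exact hU.1.1 hab haU
  · intro hup
    apply Set.Subset.antisymm
    · intro x hx U hU; exact hU.2 hx
    · intro x hx
      by_contra hxS
      have : x ∈ {z : P | ¬ z ≤ x} :=
        hx _ ⟨scottOpen_compl_le x, fun s hs hsx => hxS (hup hsx hs)⟩
      exact this (le_refl x)

lemma scottOpen_up_of_finite {d : P} (hd : IsFiniteElt d) : ScottOpen {x : P | d ≤ x} := by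
  refine ⟨fun a b hab ha => le_trans ha hab, ?_⟩
  intro D hne hdir a ha hda
  obtain ⟨e, heD, hde⟩ := hd D hne hdir a ha hda
  exact ⟨e, heD, hde⟩

lemma isFiniteElt_bot [OrderBot P] : IsFiniteElt (⊥ : P) := by
  intro D hne _ _ _ _
  obtain ⟨d, hd⟩ := hne
  exact ⟨d, hd, bot_le⟩

lemma isLUB_pair_finiteElt {a b s : P} (ha : IsFiniteElt a) (hb : IsFiniteElt b)
    (hs : IsLUB {a, b} s) : IsFiniteElt s := by
  intro D hne hdir t ht hst
  have has : a ≤ s := hs.1 (by simp)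
  have hbs : b ≤ s := hs.1 (by simp)
  obtain ⟨u, huD, hau⟩ := ha D hne hdir t ht (le_trans has hst)
  obtain ⟨v, hvD, hbv⟩ := hb D hne hdir t ht (le_trans hbs hst)
  obtain ⟨w, hwD, huw, hvw⟩ := hdir u huD v hvD
  refine ⟨w, hwD, hs.2 ?_⟩
  intro z hz
  rcases hz with rfl | hz
  · exact le_trans hau huw
  · simp only [Set.mem_singleton_iff] at hz; subst hz; exact le_trans hbv hvw

/-- Binary join sets. -/
def joinSet (F F' : Set P) : Set P := {s | ∃ a ∈ F, ∃ b ∈ F', IsLUB {a, b} s}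

lemma joinSet_finite (hanti : ∀ f g : P, f ≤ g → g ≤ f → f = g)
    {F F' : Set P} (hF : F.Finite) (hF' : F'.Finite) : (joinSet F F').Finite := by
  have : joinSet F F' ⊆ ⋃ a ∈ F, ⋃ b ∈ F', {s | IsLUB {a, b} s} := by
    rintro s ⟨a, haF, b, hbF, hs⟩
    exact Set.mem_biUnion haF (Set.mem_biUnion hbF hs)
  refine Set.Finite.subset (Set.Finite.biUnion hF fun a _ => Set.Finite.biUnion hF' fun b _ => ?_) this
  refine Set.Subsingleton.finite ?_
  intro s₁ h₁ s₂ h₂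
  exact hanti _ _ (h₁.2 h₂.1) (h₂.2 h₁.1)

lemma upC_joinSet (hbc : BoundedComplete P) (F F' : Set P) :
    upC (joinSet F F') = upC F ∩ upC F' := by
  ext z
  constructor
  · rintro ⟨s, ⟨a, haF, b, hbF, hs⟩, hsz⟩
    exact ⟨⟨a, haF, le_trans (hs.1 (by simp)) hsz⟩, ⟨b, hbF, le_trans (hs.1 (by simp)) hsz⟩⟩
  · rintro ⟨⟨a, haF, haz⟩, ⟨b, hbF, hbz⟩⟩
    obtain ⟨s, hs⟩ := hbc a b ⟨z, haz, hbz⟩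
    refine ⟨s, ⟨a, haF, b, hbF, hs⟩, hs.2 ?_⟩
    rintro w (rfl | hw)
    · exact haz
    · simp only [Set.mem_singleton_iff] at hw; subst hw; exact hbz

lemma directedOn_finset_ub [DecidableEq P] {D : Set P} (hdir : DirectedOn (· ≤ ·) D)
    (hne : D.Nonempty) (s : Finset P) (hsD : ∀ a ∈ s, a ∈ D) :
    ∃ b ∈ D, ∀ a ∈ s, a ≤ b := by
  classical
  induction s using Finset.induction_on with
  | empty =>
    obtain ⟨d, hd⟩ := hne; exact ⟨d, hd, fun a ha => absurd ha (by simp)⟩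
  | @insert x t hxt ih =>
    obtain ⟨b, hbD, hb⟩ := ih (fun a ha => hsD a (Finset.mem_insert_of_mem ha))
    have hxD : x ∈ D := hsD x (Finset.mem_insert_self x t)
    obtain ⟨c, hcD, hxc, hbc⟩ := hdir x hxD b hbD
    refine ⟨c, hcD, ?_⟩
    intro a ha
    rcases Finset.mem_insert.mp ha with rfl | ha
    · exact hxc
    · exact le_trans (hb a ha) hbc

lemma scottCont_preimage {Q : Type*} [Preorder Q] {f : P → Q} (hf : ScottCont' f)
    {V : Set Q} (hV : ScottOpen V) : ScottOpen (f ⁻¹' V) := by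
  constructor
  · intro a b hab ha; exact hV.1 (hf.1 hab) ha
  · intro D hne hdir a ha haV
    have him : IsLUB (f '' D) (f a) := hf.2 D hne hdir a ha
    have hdir' : DirectedOn (· ≤ ·) (f '' D) := by
      rintro _ ⟨u, hu, rfl⟩ _ ⟨v, hv, rfl⟩
      obtain ⟨w, hwD, huw, hvw⟩ := hdir u hu v hv
      exact ⟨f w, ⟨w, hwD, rfl⟩, hf.1 huw, hf.1 hvw⟩
    obtain ⟨_, ⟨⟨u, huD, rfl⟩, huV⟩⟩ := hV.2 (f '' D) (hne.image f) hdir' (f a) him haV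
    exact ⟨u, huD, huV⟩

lemma scottCont_continuous {Q : Type*} [Preorder Q] {f : P → Q} (hf : ScottCont' f) :
    @Continuous P Q (scottTop P) (scottTop Q) f := by
  rw [@continuous_def P Q (scottTop P) (scottTop Q)]
  intro V hV
  exact scottCont_preimage hf hV

end Generic

end FSRAux
namespace FSRAux
open Set
variable {P : Type*}

section Rudin
variable [Preorder P]

private def sec (R : Set (ι × P)) (i : ι) : Set P := {x | (i, x) ∈ R}

/-- Rudin's Lemma. -/
lemma rudin {ι : Type*} [Nonempty ι] (G : ι → Set P)
    (hne : ∀ i, (G i).Nonempty) (hfin : ∀ i, (G i).Finite)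
    (hfil : ∀ i j, ∃ k, upC (G k) ⊆ upC (G i) ∩ upC (G j)) :
    ∃ D : Set P, D.Nonempty ∧ DirectedOn (· ≤ ·) D ∧
      (∀ i, (D ∩ G i).Nonempty) ∧ D ⊆ ⋃ i, G i := by
  classical
  set S : Set (Set (ι × P)) :=
    {R | R ⊆ {q : ι × P | q.2 ∈ G q.1} ∧ (∀ i, (sec R i).Nonempty) ∧
      ∀ i j, ∃ k, upC (sec R k) ⊆ upC (sec R i) ∩ upC (sec R j)} with hS
  have hsec_mono : ∀ {R R' : Set (ι × P)}, R ⊆ R' → ∀ i, sec R i ⊆ sec R' i :=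
    fun h i x hx => h hx
  -- Zorn's chain condition
  have hzorn : ∀ c ⊆ S, IsChain (· ⊆ ·) c → c.Nonempty →
      ∃ lb ∈ S, ∀ s ∈ c, lb ⊆ s := by
    intro c hcS hchain hcne
    -- for each i, a member of the chain whose i-section is least
    have hleast : ∀ i, ∃ R₀ ∈ c, ∀ R ∈ c, sec R₀ i ⊆ sec R i := by
      intro i
      have himfin : ((fun R => sec R i) '' c).Finite := by
        refine Set.Finite.subset (hfin i).finite_subsets ?_
        rintro _ ⟨R, hRc, rfl⟩
        exact fun x hx => (hcS hRc).1 hx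
      obtain ⟨R₀, hR₀c, hmin⟩ :=
        Set.Finite.exists_minimalFor' (fun R => sec R i) c himfin hcne
      refine ⟨R₀, hR₀c, ?_⟩
      intro R hRc
      rcases hchain.total hR₀c hRc with h | h
      · exact hsec_mono h i
      · exact hmin hRc (hsec_mono h i)
    have hsecint : ∀ i, ∀ R₀ ∈ c, (∀ R ∈ c, sec R₀ i ⊆ sec R i) →
        sec (⋂₀ c) i = sec R₀ i := by
      intro i R₀ hR₀c hleast'
      apply Set.Subset.antisymm
      · intro x hx; exact hx R₀ hR₀c
      · intro x hx R hRc; exact hleast' R hRc hx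
    refine ⟨⋂₀ c, ⟨?_, ?_, ?_⟩, fun s hs => Set.sInter_subset_of_mem hs⟩
    · obtain ⟨R, hRc⟩ := hcne
      exact fun q hq => (hcS hRc).1 (hq R hRc)
    · intro i
      obtain ⟨R₀, hR₀c, hl⟩ := hleast i
      rw [hsecint i R₀ hR₀c hl]
      exact (hcS hR₀c).2.1 i
    · intro i j
      obtain ⟨R₀, hR₀c, hl₀⟩ := hleast i
      obtain ⟨R₁, hR₁c, hl₁⟩ := hleast j
      -- take the smaller of the two
      obtain ⟨R₂, hR₂c, hR₂₀, hR₂₁⟩ : ∃ R₂ ∈ c, R₂ ⊆ R₀ ∧ R₂ ⊆ R₁ := by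
        rcases hchain.total hR₀c hR₁c with h | h
        · exact ⟨R₀, hR₀c, Set.Subset.rfl, h⟩
        · exact ⟨R₁, hR₁c, h, Set.Subset.rfl⟩
      have hi : sec R₂ i = sec (⋂₀ c) i := by
        rw [hsecint i R₀ hR₀c hl₀]
        exact Set.Subset.antisymm (hsec_mono hR₂₀ i) (hl₀ R₂ hR₂c)
      have hj : sec R₂ j = sec (⋂₀ c) j := by
        rw [hsecint j R₁ hR₁c hl₁]
        exact Set.Subset.antisymm (hsec_mono hR₂₁ j) (hl₁ R₂ hR₂c)
      obtain ⟨k, hk⟩ := (hcS hR₂c).2.2 i j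
      refine ⟨k, ?_⟩
      intro z hz
      have : z ∈ upC (sec R₂ k) := upC_mono (hsec_mono (Set.sInter_subset_of_mem hR₂c) k) hz
      rw [hi, hj] at hk
      exact hk this
  -- the full graph is a member
  have hstart : {q : ι × P | q.2 ∈ G q.1} ∈ S := by
    refine ⟨Set.Subset.rfl, fun i => hne i, fun i j => hfil i j⟩
  obtain ⟨m, -, hmin⟩ := zorn_superset_nonempty S hzorn _ hstart
  have hmS : m ∈ S := hmin.prop
  set E : ι → Set P := sec m with hE
  -- Claim A : every point of every section is dominated by a whole section
  have claimA : ∀ i, ∀ x ∈ E i, ∃ k, ∀ z ∈ E k, x ≤ z := by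
    intro i x hxi
    by_contra hcon
    push_neg at hcon
    set R' : Set (ι × P) := {q ∈ m | ¬ x ≤ q.2} with hR'
    have hsecR' : ∀ k, sec R' k = {z ∈ E k | ¬ x ≤ z} := fun k => rfl
    have hR'S : R' ∈ S := by
      refine ⟨fun q hq => hmS.1 hq.1, ?_, ?_⟩
      · intro k
        obtain ⟨z, hzk, hxz⟩ := hcon k
        exact ⟨z, hzk, hxz⟩
      · intro i' j'
        obtain ⟨k, hk⟩ := hmS.2.2 i' j'
        refine ⟨k, ?_⟩
        rintro z ⟨w, ⟨hwk, hxw⟩, hwz⟩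
        have hw : w ∈ upC (E i') ∩ upC (E j') := hk ⟨w, hwk, le_refl w⟩
        obtain ⟨⟨u, hu, huw⟩, ⟨v, hv, hvw⟩⟩ := hw
        have hxu : ¬ x ≤ u := fun h => hxw (le_trans h huw)
        have hxv : ¬ x ≤ v := fun h => hxw (le_trans h hvw)
        exact ⟨⟨u, ⟨hu, hxu⟩, le_trans huw hwz⟩, ⟨v, ⟨hv, hxv⟩, le_trans hvw hwz⟩⟩
    have hsub : R' ⊆ m := fun q hq => hq.1
    have : m ⊆ R' := hmin.le_of_le hR'S hsub
    exact (this hxi).2 (le_refl x)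
  refine ⟨⋃ i, E i, ?_, ?_, ?_, ?_⟩
  · obtain ⟨i⟩ := ‹Nonempty ι›
    obtain ⟨x, hx⟩ := hmS.2.1 i
    exact ⟨x, Set.mem_iUnion.mpr ⟨i, hx⟩⟩
  · rintro x hx y hy
    obtain ⟨i, hxi⟩ := Set.mem_iUnion.mp hx
    obtain ⟨j, hyj⟩ := Set.mem_iUnion.mp hy
    obtain ⟨kx, hkx⟩ := claimA i x hxi
    obtain ⟨ky, hky⟩ := claimA j y hyj
    obtain ⟨k, hk⟩ := hmS.2.2 kx ky
    obtain ⟨z, hzk⟩ := hmS.2.1 k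
    have hz : z ∈ upC (E kx) ∩ upC (E ky) := hk ⟨z, hzk, le_refl z⟩
    obtain ⟨⟨u, hu, huz⟩, ⟨v, hv, hvz⟩⟩ := hz
    exact ⟨z, Set.mem_iUnion.mpr ⟨k, hzk⟩,
      le_trans (hkx u hu) huz, le_trans (hky v hv) hvz⟩
  · intro i
    obtain ⟨x, hx⟩ := hmS.2.1 i
    exact ⟨x, Set.mem_iUnion.mpr ⟨i, hx⟩, hmS.1 hx⟩
  · rintro x hx
    obtain ⟨i, hxi⟩ := Set.mem_iUnion.mp hx
    exact Set.mem_iUnion.mpr ⟨i, hmS.1 hxi⟩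
end Rudin
end FSRAux
namespace FSRAux
open Set
variable {P : Type*}

section Compact
variable [Preorder P]

lemma isOpen_iff_scottOpen {U : Set P} : @IsOpen P (scottTop P) U ↔ ScottOpen U := Iff.rfl

/-- Filtered intersections of finitely-generated upper sets are compact. -/
lemma compact_of_filtered_finitary (hP : IsDcpo P)
    (F : Set (Set P)) (hFne : F.Nonempty)
    (hfin : ∀ s ∈ F, s.Finite)
    (hfil : ∀ s ∈ F, ∀ t ∈ F, ∃ u ∈ F, upC u ⊆ upC s ∩ upC t) :
    @IsCompact P (scottTop P) (⋂ s ∈ F, upC s) := by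
  classical
  letI : TopologicalSpace P := scottTop P
  set K : Set P := ⋂ s ∈ F, upC s with hK
  refine isCompact_of_finite_subcover ?_
  intro ι U hUo hcover
  set W : Set P := ⋃ i, U i with hW
  have hWo : ScottOpen W := isOpen_iff_scottOpen.mp (isOpen_iUnion hUo)
  have hKW : K ⊆ W := hcover
  -- first find a single member of the family inside W
  have hexists : ∃ s ∈ F, s ⊆ W := by
    by_contra hcon
    push_neg at hcon
    haveI : Nonempty ↥F := Set.Nonempty.to_subtype hFne
    have hGne : ∀ s : ↥F, (s.1 \ W).Nonempty := by
      intro s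
      obtain ⟨x, hxs, hxW⟩ := Set.not_subset.mp (hcon s.1 s.2)
      exact ⟨x, hxs, hxW⟩
    have hGfin : ∀ s : ↥F, (s.1 \ W).Finite :=
      fun s => (hfin s.1 s.2).subset Set.diff_subset
    have hGfil : ∀ s t : ↥F, ∃ u : ↥F,
        upC (u.1 \ W) ⊆ upC (s.1 \ W) ∩ upC (t.1 \ W) := by
      intro s t
      obtain ⟨u, huF, hu⟩ := hfil s.1 s.2 t.1 t.2
      refine ⟨⟨u, huF⟩, ?_⟩
      rintro z ⟨w, ⟨hwu, hwW⟩, hwz⟩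
      have hw : w ∈ upC s.1 ∩ upC t.1 := hu ⟨w, hwu, le_refl w⟩
      obtain ⟨⟨a, ha, haw⟩, ⟨b, hb, hbw⟩⟩ := hw
      have haW : a ∉ W := fun h => hwW (hWo.1 haw h)
      have hbW : b ∉ W := fun h => hwW (hWo.1 hbw h)
      exact ⟨⟨a, ⟨ha, haW⟩, le_trans haw hwz⟩, ⟨b, ⟨hb, hbW⟩, le_trans hbw hwz⟩⟩
    obtain ⟨D, hDne, hDdir, hDmeets, hDsub⟩ :=
      rudin (fun s : ↥F => s.1 \ W) hGne hGfin hGfil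
    obtain ⟨a, ha⟩ := hP D hDne hDdir
    have haK : a ∈ K := by
      refine Set.mem_iInter₂.mpr fun s hsF => ?_
      obtain ⟨x, hxD, hxs, -⟩ := hDmeets ⟨s, hsF⟩
      exact ⟨x, hxs, ha.1 hxD⟩
    have haW : a ∈ W := hKW haK
    obtain ⟨d, hdD, hdW⟩ := hWo.2 D hDne hDdir a ha haW
    obtain ⟨s, hds⟩ := Set.mem_iUnion.mp (hDsub hdD)
    exact hds.2 hdW
  obtain ⟨s, hsF, hsW⟩ := hexists
  -- pick a covering index for each generator
  have hch : ∀ x : ↥s, ∃ i, x.1 ∈ U i := fun x => Set.mem_iUnion.mp (hsW x.2)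
  choose ix hix using hch
  refine ⟨(hfin s hsF).toFinset.attach.image
    (fun x => ix ⟨x.1, ((hfin s hsF).mem_toFinset).mp x.2⟩), ?_⟩
  intro y hy
  have hys : y ∈ upC s := Set.mem_iInter₂.mp hy s hsF
  obtain ⟨x, hxs, hxy⟩ := hys
  set x' : ↥s := ⟨x, hxs⟩ with hx'
  have hyU : y ∈ U (ix x') := (isOpen_iff_scottOpen.mp (hUo (ix x'))).1 hxy (hix x')
  refine Set.mem_biUnion ?_ hyU
  refine Finset.mem_image.mpr ⟨⟨x, ((hfin s hsF).mem_toFinset).mpr hxs⟩, Finset.mem_attach _ _, rfl⟩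

lemma compact_upC {K : Set P} (hK : @IsCompact P (scottTop P) K) :
    @IsCompact P (scottTop P) (upC K) := by
  letI : TopologicalSpace P := scottTop P
  refine isCompact_of_finite_subcover ?_
  intro ι U hUo hcover
  obtain ⟨t, ht⟩ := hK.elim_finite_subcover U hUo (Set.Subset.trans subset_upC hcover)
  refine ⟨t, ?_⟩
  rintro y ⟨k, hkK, hky⟩
  obtain ⟨i, hit, hki⟩ := Set.mem_iUnion₂.mp (ht hkK)
  exact Set.mem_biUnion hit ((isOpen_iff_scottOpen.mp (hUo i)).1 hky hki)

/-- In an algebraic dcpo with bottom, a compact set inside an open set admits a finitary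
upper-set approximation in between. -/
lemma compact_finitary_cover [OrderBot P] (hPa : IsAlgebraicDcpo P) {Q U : Set P}
    (hQ : @IsCompact P (scottTop P) Q) (hU : ScottOpen U) (hQU : Q ⊆ U) :
    ∃ E : Set P, E.Finite ∧ (∀ e ∈ E, IsFiniteElt e) ∧ E ⊆ U ∧ Q ⊆ upC E := by
  classical
  letI : TopologicalSpace P := scottTop P
  set ι := {d : P // IsFiniteElt d ∧ d ∈ U} with hι
  have hcov : Q ⊆ ⋃ d : ι, {x : P | d.1 ≤ x} := by
    intro q hq
    have h := hPa q
    have hne : {d : P | IsFiniteElt d ∧ d ≤ q}.Nonempty := ⟨⊥, isFiniteElt_bot, bot_le⟩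
    obtain ⟨d, ⟨hdfin, hdq⟩, hdU⟩ := hU.2 _ hne h.1 q h.2 (hQU hq)
    exact Set.mem_iUnion.mpr ⟨⟨d, hdfin, hdU⟩, hdq⟩
  obtain ⟨t, ht⟩ := hQ.elim_finite_subcover _
    (fun d : ι => isOpen_iff_scottOpen.mpr (scottOpen_up_of_finite d.2.1)) hcov
  refine ⟨Subtype.val '' (t : Set ι), (t.finite_toSet).image _, ?_, ?_, ?_⟩
  · rintro _ ⟨d, -, rfl⟩; exact d.2.1
  · rintro _ ⟨d, -, rfl⟩; exact d.2.2
  · intro q hq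
    obtain ⟨d, hdt, hdq⟩ := Set.mem_iUnion₂.mp (ht hq)
    exact ⟨d.1, ⟨d, hdt, rfl⟩, hdq⟩

end Compact
end FSRAux
namespace FSRAux
open Set

section FunSpace
variable {X Y : Type*} [PartialOrder X] [OrderBot X] [PartialOrder Y] [OrderBot Y]

lemma contMap_le_iff {f g : ContMap X Y} : f ≤ g ↔ ∀ x, f.1 x ≤ g.1 x := Iff.rfl

lemma contMap_eq {f g : ContMap X Y} (h₁ : f ≤ g) (h₂ : g ≤ f) : f = g :=
  Subtype.ext (funext fun x => le_antisymm (h₁ x) (h₂ x))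

lemma ev_image_nonempty (x : X) {D : Set (ContMap X Y)} (hne : D.Nonempty) :
    ((fun f : ContMap X Y => f.1 x) '' D).Nonempty := hne.image _

lemma ev_image_directed (x : X) {D : Set (ContMap X Y)} (hdir : DirectedOn (· ≤ ·) D) :
    DirectedOn (· ≤ ·) ((fun f : ContMap X Y => f.1 x) '' D) := by
  rintro _ ⟨u, hu, rfl⟩ _ ⟨v, hv, rfl⟩
  obtain ⟨w, hw, huw, hvw⟩ := hdir u hu v hv
  exact ⟨w.1 x, ⟨w, hw, rfl⟩, huw x, hvw x⟩

lemma exists_pointwise_lub (hYd : IsDcpo Y) {D : Set (ContMap X Y)} (hne : D.Nonempty)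
    (hdir : DirectedOn (· ≤ ·) D) :
    ∃ G : ContMap X Y, IsLUB D G ∧
      ∀ x, IsLUB ((fun f : ContMap X Y => f.1 x) '' D) (G.1 x) := by
  choose g hg using fun x => hYd _ (ev_image_nonempty x hne) (ev_image_directed x hdir)
  have hmono : Monotone g := by
    intro x y hxy
    refine (hg x).2 ?_
    rintro _ ⟨f, hf, rfl⟩
    exact le_trans (f.2.1 hxy) ((hg y).1 ⟨f, hf, rfl⟩)
  have hcont : ScottCont' g := by
    refine ⟨hmono, ?_⟩
    intro E hEne hEdir a ha
    constructor
    · rintro _ ⟨x, hx, rfl⟩; exact hmono (ha.1 hx)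
    · intro u hu
      refine (hg a).2 ?_
      rintro _ ⟨f, hf, rfl⟩
      have hfa : IsLUB (f.1 '' E) (f.1 a) := f.2.2 E hEne hEdir a ha
      refine hfa.2 ?_
      rintro _ ⟨x, hx, rfl⟩
      exact le_trans ((hg x).1 ⟨f, hf, rfl⟩) (hu ⟨x, hx, rfl⟩)
  refine ⟨⟨g, hcont⟩, ⟨?_, ?_⟩, hg⟩
  · intro f hf
    exact contMap_le_iff.mpr fun x => (hg x).1 ⟨f, hf, rfl⟩
  · intro h hh
    refine contMap_le_iff.mpr fun x => (hg x).2 ?_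
    rintro _ ⟨f, hf, rfl⟩
    exact hh hf x

lemma isDcpo_contMap (hYd : IsDcpo Y) : IsDcpo (ContMap X Y) := by
  intro D hne hdir
  obtain ⟨G, hG, -⟩ := exists_pointwise_lub hYd hne hdir
  exact ⟨G, hG⟩

lemma isLUB_pointwise (hYd : IsDcpo Y) {D : Set (ContMap X Y)} (hne : D.Nonempty)
    (hdir : DirectedOn (· ≤ ·) D) {F : ContMap X Y} (hF : IsLUB D F) (x : X) :
    IsLUB ((fun f : ContMap X Y => f.1 x) '' D) (F.1 x) := by
  obtain ⟨G, hG, hGx⟩ := exists_pointwise_lub hYd hne hdir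
  have : F = G := contMap_eq (hF.2 hG.1) (hG.2 hF.1)
  rw [this]
  exact hGx x

lemma stepFun_apply_of_le {d : X} {e : Y} {x : X} (h : d ≤ x) : stepFun d e x = e := if_pos h

lemma stepFun_apply_of_not_le {d : X} {e : Y} {x : X} (h : ¬ d ≤ x) : stepFun d e x = ⊥ :=
  if_neg h

lemma scottCont_stepFun {d : X} (hd : IsFiniteElt d) (e : Y) :
    ScottCont' (stepFun d e : X → Y) := by
  constructor
  · intro x y hxy
    by_cases hdx : d ≤ x
    · rw [stepFun_apply_of_le hdx, stepFun_apply_of_le (le_trans hdx hxy)]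
    · rw [stepFun_apply_of_not_le hdx]; exact bot_le
  · intro D hne hdir a ha
    by_cases hda : d ≤ a
    · obtain ⟨c, hcD, hdc⟩ := hd D hne hdir a ha hda
      rw [stepFun_apply_of_le hda]
      constructor
      · rintro _ ⟨x, hx, rfl⟩
        by_cases hdx : d ≤ x
        · rw [stepFun_apply_of_le hdx]
        · rw [stepFun_apply_of_not_le hdx]; exact bot_le
      · intro u hu
        have := hu ⟨c, hcD, rfl⟩
        rwa [stepFun_apply_of_le hdc] at this
    · rw [stepFun_apply_of_not_le hda]
      constructor
      · rintro _ ⟨x, hx, rfl⟩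
        have hdx : ¬ d ≤ x := fun h => hda (le_trans h (ha.1 hx))
        rw [stepFun_apply_of_not_le hdx]
      · intro u _; exact bot_le

lemma stepFun_le_iff {d : X} {e : Y} {g : ContMap X Y} :
    (∀ x, stepFun d e x ≤ g.1 x) ↔ e ≤ g.1 d := by
  constructor
  · intro h
    have := h d
    rwa [stepFun_apply_of_le (le_refl d)] at this
  · intro h x
    by_cases hdx : d ≤ x
    · rw [stepFun_apply_of_le hdx]
      exact le_trans h (g.2.1 hdx)
    · rw [stepFun_apply_of_not_le hdx]; exact bot_le

lemma isFiniteElt_step (hYd : IsDcpo Y) {d : X} {e : Y}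
    (hd : IsFiniteElt d) (he : IsFiniteElt e) :
    IsFiniteElt (⟨stepFun d e, scottCont_stepFun hd e⟩ : ContMap X Y) := by
  intro D hne hdir a ha hle
  have hed : e ≤ a.1 d := stepFun_le_iff.mp (contMap_le_iff.mp hle)
  have hlub := isLUB_pointwise hYd hne hdir ha d
  obtain ⟨_, ⟨f, hf, rfl⟩, hef⟩ :=
    he _ (ev_image_nonempty d hne) (ev_image_directed d hdir) _ hlub hed
  exact ⟨f, hf, contMap_le_iff.mpr (stepFun_le_iff.mpr hef)⟩

lemma contMap_bc (hYb : BoundedComplete Y) : BoundedComplete (ContMap X Y) := by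
  rintro a b ⟨c, hac, hbc⟩
  choose s hs using fun x => hYb (a.1 x) (b.1 x) ⟨c.1 x, hac x, hbc x⟩
  have hax : ∀ x, a.1 x ≤ s x := fun x => (hs x).1 (by simp)
  have hbx : ∀ x, b.1 x ≤ s x := fun x => (hs x).1 (by simp)
  have hleast : ∀ x (u : Y), a.1 x ≤ u → b.1 x ≤ u → s x ≤ u := by
    intro x u hau hbu
    refine (hs x).2 ?_
    rintro z (rfl | hz)
    · exact hau
    · simp only [Set.mem_singleton_iff] at hz; subst hz; exact hbu
  have hmono : Monotone s := fun x y hxy =>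
    hleast x (s y) (le_trans (a.2.1 hxy) (hax y)) (le_trans (b.2.1 hxy) (hbx y))
  have hcont : ScottCont' s := by
    refine ⟨hmono, ?_⟩
    intro E hEne hEdir t ht
    constructor
    · rintro _ ⟨x, hx, rfl⟩; exact hmono (ht.1 hx)
    · intro u hu
      have hau : a.1 t ≤ u := by
        refine (a.2.2 E hEne hEdir t ht).2 ?_
        rintro _ ⟨x, hx, rfl⟩
        exact le_trans (hax x) (hu ⟨x, hx, rfl⟩)
      have hbu : b.1 t ≤ u := by
        refine (b.2.2 E hEne hEdir t ht).2 ?_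
        rintro _ ⟨x, hx, rfl⟩
        exact le_trans (hbx x) (hu ⟨x, hx, rfl⟩)
      exact hleast t u hau hbu
  refine ⟨⟨s, hcont⟩, ?_, ?_⟩
  · rintro f (rfl | hf)
    · exact contMap_le_iff.mpr hax
    · simp only [Set.mem_singleton_iff] at hf; subst hf
      exact contMap_le_iff.mpr hbx
  · intro w hw
    have haw : a ≤ w := hw (by simp)
    have hbw : b ≤ w := hw (by simp)
    exact contMap_le_iff.mpr fun x => hleast x (w.1 x) (haw x) (hbw x)

/-- The bottom element of the function space. -/
noncomputable def botC : ContMap X Y :=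
  ⟨fun _ => ⊥, fun _ _ _ => bot_le, by
    intro D hne hdir a ha
    constructor
    · rintro _ ⟨x, hx, rfl⟩; exact le_refl _
    · intro u _; exact bot_le⟩

lemma botC_le (f : ContMap X Y) : botC ≤ f := contMap_le_iff.mpr fun _ => bot_le

lemma isFiniteElt_botC : IsFiniteElt (botC : ContMap X Y) := by
  intro D hne _ _ _ _
  obtain ⟨f, hf⟩ := hne
  exact ⟨f, hf, botC_le f⟩

end FunSpace
end FSRAux
open FSRAux

/-- For Scott domains `X, Y`, `Q ⇒ V` is Scott-open in the
function space when `Q` is compact-saturated and `V` Scott-open; and `V' ⇒ Q'`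
is compact-saturated when `V'` is Scott-open and `Q'` compact-saturated. -/
theorem functionSpace_realizability_open_and_compactSaturated
    {X Y : Type*} [PartialOrder X] [OrderBot X] [PartialOrder Y] [OrderBot Y]
    (hXd : IsDcpo X) (hXa : IsAlgebraicDcpo X) (hXb : BoundedComplete X)
    (hYd : IsDcpo Y) (hYa : IsAlgebraicDcpo Y) (hYb : BoundedComplete Y) :
    (∀ Q : Set X, @IsCompact X (scottTop X) Q → ScottSaturated Q →
      ∀ V : Set Y, ScottOpen V →
        ScottOpen {f : ContMap X Y | ∀ x ∈ Q, f.1 x ∈ V}) ∧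
    (∀ V' : Set X, ScottOpen V' →
      ∀ Q' : Set Y, @IsCompact Y (scottTop Y) Q' → ScottSaturated Q' →
        @IsCompact (ContMap X Y) (scottTop (ContMap X Y))
            {f : ContMap X Y | ∀ x ∈ V', f.1 x ∈ Q'} ∧
        ScottSaturated {f : ContMap X Y | ∀ x ∈ V', f.1 x ∈ Q'}) := by
  classical
  constructor
  · -- Part 1 : openness of `Q ⇒ V`
    intro Q hQc hQsat V hV
    letI : TopologicalSpace X := scottTop X
    constructor
    · intro f g hfg hf x hx
      exact hV.1 (hfg x) (hf x hx)
    · intro D hne hdir F hF hFO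
      have hpt := fun x => isLUB_pointwise hYd hne hdir hF x
      set Ucov : ↥D → Set X := fun f => (f.1.1) ⁻¹' V with hUcov
      have hUo : ∀ f : ↥D, ScottOpen (Ucov f) := fun f => scottCont_preimage f.1.2 hV
      have hcov : Q ⊆ ⋃ f : ↥D, Ucov f := by
        intro q hq
        have hFq : F.1 q ∈ V := hFO q hq
        obtain ⟨_, ⟨⟨f, hf, rfl⟩, hfV⟩⟩ := hV.2 _ (ev_image_nonempty q hne)
          (ev_image_directed q hdir) _ (hpt q) hFq
        exact Set.mem_iUnion.mpr ⟨⟨f, hf⟩, hfV⟩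
      obtain ⟨t, ht⟩ := hQc.elim_finite_subcover Ucov
        (fun f => isOpen_iff_scottOpen.mpr (hUo f)) hcov
      obtain ⟨g, hgD, hg⟩ := directedOn_finset_ub hdir hne (t.image Subtype.val)
        (by intro a ha; obtain ⟨f, -, rfl⟩ := Finset.mem_image.mp ha; exact f.2)
      refine ⟨g, hgD, ?_⟩
      intro x hx
      obtain ⟨f, hft, hxf⟩ := Set.mem_iUnion₂.mp (ht hx)
      have hfg : f.1 ≤ g := hg f.1 (Finset.mem_image_of_mem Subtype.val hft)
      exact hV.1 (hfg x) hxf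
  · -- Part 2 : compact saturation of `V' ⇒ Q'`
    intro V' hV' Q' hQ'c hQ'sat
    have hQ'up : ∀ ⦃a b : Y⦄, a ≤ b → a ∈ Q' → b ∈ Q' :=
      scottSaturated_iff_upper.mp hQ'sat
    set K : Set (ContMap X Y) := {f | ∀ x ∈ V', f.1 x ∈ Q'} with hKdef
    have hKup : ∀ ⦃f g : ContMap X Y⦄, f ≤ g → f ∈ K → g ∈ K :=
      fun f g hfg hf x hx => hQ'up (hfg x) (hf x hx)
    have hsat : ScottSaturated K := scottSaturated_iff_upper.mpr hKup
    refine ⟨?_, hsat⟩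
    set F : Set (Set (ContMap X Y)) :=
      {s | s.Finite ∧ (∀ g ∈ s, IsFiniteElt g) ∧ K ⊆ upC s} with hFdef
    have hanti : ∀ f g : ContMap X Y, f ≤ g → g ≤ f → f = g := fun f g => contMap_eq
    have hFne : F.Nonempty := by
      refine ⟨{botC}, Set.finite_singleton _, ?_, ?_⟩
      · intro g hg
        rw [Set.mem_singleton_iff] at hg; subst hg; exact isFiniteElt_botC
      · exact fun f _ => ⟨botC, rfl, botC_le f⟩
    have hFfil : ∀ s ∈ F, ∀ t ∈ F, ∃ u ∈ F, upC u ⊆ upC s ∩ upC t := by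
      intro s hs t ht
      refine ⟨joinSet s t, ⟨joinSet_finite hanti hs.1 ht.1, ?_, ?_⟩, ?_⟩
      · rintro g ⟨a, haF, b, hbF, hg⟩
        exact isLUB_pair_finiteElt (hs.2.1 a haF) (ht.2.1 b hbF) hg
      · rw [upC_joinSet (contMap_bc hYb)]
        exact Set.subset_inter hs.2.2 ht.2.2
      · rw [upC_joinSet (contMap_bc hYb)]
    -- the saturated-compact characterization of membership in Q'
    have hmemQ' : ∀ y : Y,
        (∀ E : Set Y, E.Finite → (∀ e ∈ E, IsFiniteElt e) → Q' ⊆ upC E → y ∈ upC E) →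
        y ∈ Q' := by
      intro y hy
      by_contra hyQ
      have hQeq : Q' = ⋂₀ {U : Set Y | ScottOpen U ∧ Q' ⊆ U} := hQ'sat
      have hnot : y ∉ ⋂₀ {U : Set Y | ScottOpen U ∧ Q' ⊆ U} := by
        rw [← hQeq]; exact hyQ
      rw [Set.mem_sInter] at hnot
      push_neg at hnot
      obtain ⟨U, hU, hyU⟩ := hnot
      obtain ⟨E, hEfin, hEelts, hEU, hQE⟩ := compact_finitary_cover hYa hQ'c hU.1 hU.2
      exact hyU (upC_subset_of_upper hU.1.1 hEU (hy E hEfin hEelts hQE))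
    -- K is the filtered intersection of the family F
    have hKeq : K = ⋂ s ∈ F, upC s := by
      apply Set.Subset.antisymm
      · intro f hf
        exact Set.mem_iInter₂.mpr fun s hs => hs.2.2 hf
      · intro f hf x hx
        -- find a finite element of X below x inside V'
        have hne₀ : {d : X | IsFiniteElt d ∧ d ≤ x}.Nonempty := ⟨⊥, isFiniteElt_bot, bot_le⟩
        obtain ⟨d, ⟨hdfin, hdx⟩, hdV'⟩ :=
          hV'.2 _ hne₀ (hXa x).1 x (hXa x).2 hx
        have hfd : f.1 d ∈ Q' := by
          refine hmemQ' _ ?_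
          intro E hEfin hEelts hQE
          set stepC : Y → ContMap X Y :=
            fun e => ⟨stepFun d e, scottCont_stepFun hdfin e⟩ with hstepC
          have hBF : stepC '' E ∈ F := by
            refine ⟨hEfin.image _, ?_, ?_⟩
            · rintro _ ⟨e, heE, rfl⟩
              exact isFiniteElt_step hYd hdfin (hEelts e heE)
            · intro h hh
              obtain ⟨e, heE, hed⟩ := hQE (hh d hdV')
              exact ⟨stepC e, ⟨e, heE, rfl⟩,
                contMap_le_iff.mpr (stepFun_le_iff.mpr hed)⟩
          obtain ⟨_, ⟨e, heE, rfl⟩, hgf⟩ := Set.mem_iInter₂.mp hf _ hBF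
          exact ⟨e, heE, stepFun_le_iff.mp (contMap_le_iff.mp hgf)⟩
        exact hQ'up (f.2.1 hdx) hfd
    have hcpt := compact_of_filtered_finitary (isDcpo_contMap hYd) F hFne
      (fun s hs => hs.1) hFfil
    rwa [← hKeq] at hcpt
end

section
/- Let X, Y be Scott domains and let (d_i ⇒ e_i), i ∈ I, be a finite family of step functions with d_i finite in X and e_i finite in Y. The supremum ⋁_{i∈I}(d_i ⇒ e_i) exists in the pointwise-ordered space of Scott-continuous functions [X → Y] if and only if for every J ⊆ I, the family {e_j | j ∈ J} has an upper bound in Y whenever {d_j | j ∈ J} has an upper bound in X. -/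
/-!
Any upper bound `s` of the step functions gives, at a common upper bound `u` of the `d_j`, the
common upper bound `s u` of the `e_j`. Conversely, under the consistency condition each finite set
`{e_i | d_i ≤ x}` is bounded, so bounded completeness gives its supremum `s x`; finiteness of the
`d_i` makes `s` Scott-continuous, and `s` is then the supremum in `[X → Y]` because it is already
the pointwise one.
-/

theorem IsLUB.insert_of_isLUB_pair {Y : Type*} [Preorder Y] {s : Set Y} {a b m : Y}
    (hb : IsLUB s b) (hm : IsLUB {a, b} m) : IsLUB (insert a s) m := by
  rwa [isLUB_congr (t := {a, b})]
  rw [upperBounds_insert, hb.upperBounds_eq, upperBounds_insert, upperBounds_singleton]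

theorem BoundedComplete.exists_isLUB_of_finite {Y : Type*} [Preorder Y] [OrderBot Y]
    (hY : BoundedComplete Y) {S : Set Y} (hS : S.Finite) (hbdd : BddAbove S) :
    ∃ m, IsLUB S m := by
  induction S, hS using Set.Finite.induction_on with
  | empty => exact ⟨⊥, isLUB_empty⟩
  | @insert a s _ _ ih =>
    obtain ⟨c, hc⟩ := hbdd
    obtain ⟨b, hb⟩ := ih ⟨c, fun y hy => hc (Set.mem_insert_of_mem a hy)⟩
    have hbc : b ≤ c := hb.2 fun y hy => hc (Set.mem_insert_of_mem a hy)
    obtain ⟨m, hm⟩ := hY a b ⟨c, hc (Set.mem_insert a s), hbc⟩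
    exact ⟨m, hb.insert_of_isLUB_pair hm⟩

theorem scottCont'_of_isLUB_stepValues {X Y ι : Type*} [Preorder X] [Preorder Y]
    {d : ι → X} {e : ι → Y} (hd : ∀ i, IsFiniteElt (d i)) {s : X → Y}
    (hs : ∀ x, IsLUB (e '' {i | d i ≤ x}) (s x)) : ScottCont' s := by
  have hmono : Monotone s := fun x y hxy =>
    (hs x).mono (hs y) (Set.image_mono fun _ hi => le_trans hi hxy)
  refine ⟨hmono, fun D hne hdir a ha =>
    ⟨Set.forall_mem_image.2 fun x hx => hmono (ha.1 hx), fun u hu => ?_⟩⟩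
  refine (hs a).2 (Set.forall_mem_image.2 fun i hia => ?_)
  obtain ⟨x, hxD, hdx⟩ := hd i D hne hdir a ha hia
  exact ((hs x).1 (Set.mem_image_of_mem e hdx)).trans (hu (Set.mem_image_of_mem s hxD))

section StepFunctions

variable {X Y : Type*} [Preorder X] [Preorder Y] [OrderBot Y]

theorem stepFun_of_le {d x : X} (e : Y) (h : d ≤ x) : stepFun d e x = e := if_pos h

theorem stepFun_of_not_le {d x : X} (e : Y) (h : ¬d ≤ x) : stepFun d e x = ⊥ := if_neg h

theorem stepFun_le (d x : X) (e : Y) : stepFun d e x ≤ e := by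
  by_cases h : d ≤ x
  · rw [stepFun_of_le e h]
  · rw [stepFun_of_not_le e h]; exact bot_le

theorem stepFun_le_iff {d : X} {e : Y} {f : X → Y} :
    stepFun d e ≤ f ↔ ∀ x, d ≤ x → e ≤ f x := by
  refine ⟨fun h x hx => stepFun_of_le e hx ▸ h x, fun h x => ?_⟩
  by_cases hx : d ≤ x
  · rw [stepFun_of_le e hx]; exact h x hx
  · rw [stepFun_of_not_le e hx]; exact bot_le

theorem scottCont'_stepFun {d : X} (hd : IsFiniteElt d) (e : Y) : ScottCont' (stepFun d e) := by
  refine ⟨fun x y hxy => ?_, fun D hne hdir a ha => ?_⟩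
  · by_cases hx : d ≤ x
    · rw [stepFun_of_le e hx, stepFun_of_le e (hx.trans hxy)]
    · rw [stepFun_of_not_le e hx]; exact bot_le
  by_cases hda : d ≤ a
  · obtain ⟨x, hxD, hdx⟩ := hd D hne hdir a ha hda
    rw [stepFun_of_le e hda]
    exact ⟨Set.forall_mem_image.2 fun y _ => stepFun_le d y e,
      fun u hu => stepFun_of_le e hdx ▸ hu (Set.mem_image_of_mem _ hxD)⟩
  · rw [stepFun_of_not_le e hda]
    refine ⟨Set.forall_mem_image.2 fun y hy => ?_, fun _ _ => bot_le⟩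
    rw [stepFun_of_not_le e fun hdy => hda (hdy.trans (ha.1 hy))]

variable {ι : Type*} (d : ι → X) (e : ι → Y)

theorem stepFun_le_of_mem_upperBounds (hd : ∀ i, IsFiniteElt (d i)) {t : ContMap X Y}
    (ht : t ∈ upperBounds {g : ContMap X Y | ∃ i, g.1 = stepFun (d i) (e i)}) (i : ι) :
    stepFun (d i) (e i) ≤ t.1 :=
  ht (a := ⟨_, scottCont'_stepFun (hd i) (e i)⟩) ⟨i, rfl⟩

theorem isLUB_stepFun_family (hd : ∀ i, IsFiniteElt (d i)) {s : X → Y}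
    (hs : ∀ x, IsLUB (e '' {i | d i ≤ x}) (s x)) :
    IsLUB {g : ContMap X Y | ∃ i, g.1 = stepFun (d i) (e i)}
      ⟨s, scottCont'_of_isLUB_stepValues hd hs⟩ := by
  refine ⟨?_, fun t ht x => (hs x).2 (Set.forall_mem_image.2 fun i hix => ?_)⟩
  · rintro g ⟨i, hg⟩
    show g.1 ≤ s
    rw [hg]
    exact stepFun_le_iff.2 fun x hx => (hs x).1 (Set.mem_image_of_mem e hx)
  · exact stepFun_le_iff.1 (stepFun_le_of_mem_upperBounds d e hd ht i) x hix

end StepFunctions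

theorem sup_of_step_functions_exists_iff_general
    {X Y : Type*} [PartialOrder X] [PartialOrder Y] [OrderBot Y]
    (hYb : BoundedComplete Y)
    {ι : Type*} [Fintype ι] (d : ι → X) (e : ι → Y)
    (hd : ∀ i, IsFiniteElt (d i)) :
    (∃ s : ContMap X Y,
        IsLUB {g : ContMap X Y | ∃ i : ι, g.1 = stepFun (d i) (e i)} s) ↔
    (∀ J : Finset ι, (∃ u : X, ∀ j ∈ J, d j ≤ u) → ∃ v : Y, ∀ j ∈ J, e j ≤ v) := by
  classical
  constructor
  · rintro ⟨s, hs⟩ J ⟨u, hu⟩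
    exact ⟨s.1 u, fun j hj =>
      stepFun_le_iff.1 (stepFun_le_of_mem_upperBounds d e hd hs.1 j) u (hu j hj)⟩
  · intro hcons
    have hvals : ∀ x, ∃ m, IsLUB (e '' {i | d i ≤ x}) m := fun x => by
      obtain ⟨v, hv⟩ := hcons (Finset.univ.filter (d · ≤ x)) ⟨x, by simp⟩
      exact hYb.exists_isLUB_of_finite (Set.toFinite _)
        ⟨v, Set.forall_mem_image.2 fun i hi => hv i (by simpa using hi)⟩
    choose s hs using hvals
    exact ⟨_, isLUB_stepFun_family d e hd hs⟩

/-- A finite family of step functions between Scott domains has a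
supremum in the function space iff for every subfamily, the `e_j` have an upper
bound whenever the `d_j` do. -/
theorem sup_of_step_functions_exists_iff
    {X Y : Type*} [PartialOrder X] [OrderBot X] [PartialOrder Y] [OrderBot Y]
    (hXd : IsDcpo X) (hXa : IsAlgebraicDcpo X) (hXb : BoundedComplete X)
    (hYd : IsDcpo Y) (hYa : IsAlgebraicDcpo Y) (hYb : BoundedComplete Y)
    {ι : Type*} [Fintype ι] (d : ι → X) (e : ι → Y)
    (hd : ∀ i, IsFiniteElt (d i)) (he : ∀ i, IsFiniteElt (e i)) :
    (∃ s : ContMap X Y,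
        IsLUB {g : ContMap X Y | ∃ i : ι, g.1 = stepFun (d i) (e i)} s) ↔
    (∀ J : Finset ι, (∃ u : X, ∀ j ∈ J, d j ≤ u) → ∃ v : Y, ∀ j ∈ J, e j ≤ v) :=
  sup_of_step_functions_exists_iff_general hYb d e hd
end
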